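/- arXiv:1704.03584 — 3 statements merged into one kernel-verified Lean document; each statement's English description precedes it below -/
import Mathlib

section
/- Let $l \in (0,1)$, let $x_1, \dots, x_n \in \mathbb{R}^3$ be distinct points such that the sets $\{x : |x - x_i|^{p_i} \leq l\}$, $i = 1,\dots,n$, are pairwise disjoint, where $p_i > 0$. Set $V(x) = \prod_{i=1}^n |x - x_i|^{p_i}$, $p = \max_i p_i$, and $K = \max_i l^{(1-n)/p_i}$. Then for every $\gamma$ with $0 < \gamma < \min\{l^n, (l/K)^p\}$, the sublevel set $\{x \in \mathbb{R}^3 : V(x) \leq \gamma\}$ is contained in $\bigcup_{i=1}^n \{x : |x - x_i| \leq K\gamma^{1/p}\}$. -/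
theorem stmt_7 (n : ℕ) (hn : 0 < n) (x : Fin n → EuclideanSpace ℝ (Fin 3))
    (p : Fin n → ℝ) (hp : ∀ i, 0 < p i)
    (l : ℝ) (hl0 : 0 < l) (hl1 : l < 1)
    (hdistinct : Function.Injective x)
    (hdisj : ∀ i j, i ≠ j →
      Disjoint {y : EuclideanSpace ℝ (Fin 3) | ‖y - x i‖ ^ (p i) ≤ l}
               {y : EuclideanSpace ℝ (Fin 3) | ‖y - x j‖ ^ (p j) ≤ l})
    (P K : ℝ)
    (hPub : ∀ i, p i ≤ P) (hPmem : ∃ i, P = p i)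
    (hKub : ∀ i, l ^ ((1 - (n : ℝ)) / p i) ≤ K) (hKmem : ∃ i, K = l ^ ((1 - (n : ℝ)) / p i))
    (γ : ℝ) (hγ0 : 0 < γ) (hγ1 : γ < l ^ (n : ℝ)) (hγ2 : γ < (l / K) ^ P) :
    {y : EuclideanSpace ℝ (Fin 3) | ∏ i, ‖y - x i‖ ^ (p i) ≤ γ} ⊆
      ⋃ i, {y : EuclideanSpace ℝ (Fin 3) | ‖y - x i‖ ≤ K * γ ^ (1 / P)} := by
  have hP : 0 < P := by obtain ⟨i, hi⟩ := hPmem; exact hi ▸ hp i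
  have hγle1 : γ ≤ 1 :=
    le_of_lt (lt_of_lt_of_le hγ1 (Real.rpow_le_one hl0.le hl1.le (Nat.cast_nonneg n)))
  intro y hy
  simp only [Set.mem_setOf_eq] at hy
  have hex : ∃ i, ‖y - x i‖ ^ (p i) ≤ l := by
    by_contra h
    push_neg at h
    have hle : l ^ (n : ℝ) ≤ ∏ i, ‖y - x i‖ ^ (p i) := by
      rw [Real.rpow_natCast]
      calc l ^ n = ∏ _i : Fin n, l := by simp
        _ ≤ _ := Finset.prod_le_prod (fun i _ => hl0.le) (fun i _ => (h i).le)
    linarith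
  obtain ⟨i, hi⟩ := hex
  have hj : ∀ j, j ≠ i → l < ‖y - x j‖ ^ (p j) := by
    intro j hji
    by_contra h
    push_neg at h
    exact Set.disjoint_left.mp (hdisj i j (fun e => hji e.symm)) hi h
  have hprod : l ^ (n - 1) ≤ ∏ j ∈ Finset.univ.erase i, ‖y - x j‖ ^ (p j) := by
    calc l ^ (n - 1) = ∏ _j ∈ Finset.univ.erase i, l := by
          rw [Finset.prod_const, Finset.card_erase_of_mem (Finset.mem_univ i),
            Finset.card_univ, Fintype.card_fin]
      _ ≤ _ := Finset.prod_le_prod (fun j _ => hl0.le)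
          (fun j hj' => (hj j (Finset.ne_of_mem_erase hj')).le)
  have hA : 0 ≤ ‖y - x i‖ ^ (p i) := Real.rpow_nonneg (norm_nonneg _) _
  have hlp : (0 : ℝ) < l ^ (n - 1) := pow_pos hl0 _
  have hstep : ‖y - x i‖ ^ (p i) ≤ γ / l ^ (n - 1) := by
    rw [le_div_iff₀ hlp]
    calc ‖y - x i‖ ^ (p i) * l ^ (n - 1)
        ≤ ‖y - x i‖ ^ (p i) * ∏ j ∈ Finset.univ.erase i, ‖y - x j‖ ^ (p j) :=
          mul_le_mul_of_nonneg_left hprod hA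
      _ = ∏ j, ‖y - x j‖ ^ (p j) :=
          Finset.mul_prod_erase Finset.univ (fun j => ‖y - x j‖ ^ (p j)) (Finset.mem_univ i)
      _ ≤ γ := hy
  have key : ‖y - x i‖ ≤ (γ / l ^ (n - 1)) ^ (1 / p i) := by
    have h1 := Real.rpow_le_rpow hA hstep (one_div_pos.mpr (hp i)).le
    rwa [← Real.rpow_mul (norm_nonneg _), mul_one_div, div_self (hp i).ne',
      Real.rpow_one] at h1
  have heq : γ / l ^ (n - 1) = γ * l ^ (1 - (n : ℝ)) := by
    rw [← Real.rpow_natCast l (n - 1), Nat.cast_sub hn, Nat.cast_one, div_eq_mul_inv,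
      ← Real.rpow_neg hl0.le, neg_sub]
  have hrw : (γ / l ^ (n - 1)) ^ (1 / p i)
      = γ ^ (1 / p i) * l ^ ((1 - (n : ℝ)) / p i) := by
    rw [heq, Real.mul_rpow hγ0.le (Real.rpow_nonneg hl0.le _),
      ← Real.rpow_mul hl0.le, mul_one_div]
  have hγexp : γ ^ (1 / p i) ≤ γ ^ (1 / P) :=
    Real.rpow_le_rpow_of_exponent_ge hγ0 hγle1
      (one_div_le_one_div_of_le (hp i) (hPub i))
  have hfinal : (γ / l ^ (n - 1)) ^ (1 / p i) ≤ K * γ ^ (1 / P) := by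
    rw [hrw, mul_comm K]
    exact mul_le_mul hγexp (hKub i) (Real.rpow_nonneg hl0.le _) (Real.rpow_nonneg hγ0.le _)
  exact Set.mem_iUnion.mpr ⟨i, le_trans key hfinal⟩
end

section
/- With $V$, $p$, $K$, $l$, $\gamma$ as above, $\int_{\mathbb{R}^3} (\gamma - V(x))_+^4\, dx \leq n K^3 \gamma^{4 + 3/p} \int_{|x| \leq 1} (1 - |x|^p)^4\, dx$, where $(t)_+ = \max(t, 0)$. -/
open MeasureTheory

theorem stmt_8 (n : ℕ) (hn : 0 < n) (x : Fin n → EuclideanSpace ℝ (Fin 3))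
    (p : Fin n → ℝ) (hp : ∀ i, 0 < p i)
    (l : ℝ) (hl0 : 0 < l) (hl1 : l < 1)
    (hdistinct : Function.Injective x)
    (hdisj : ∀ i j, i ≠ j →
      Disjoint {y : EuclideanSpace ℝ (Fin 3) | ‖y - x i‖ ^ (p i) ≤ l}
               {y : EuclideanSpace ℝ (Fin 3) | ‖y - x j‖ ^ (p j) ≤ l})
    (P K : ℝ)
    (hPub : ∀ i, p i ≤ P) (hPmem : ∃ i, P = p i)
    (hKub : ∀ i, l ^ ((1 - (n : ℝ)) / p i) ≤ K) (hKmem : ∃ i, K = l ^ ((1 - (n : ℝ)) / p i))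
    (γ : ℝ) (hγ0 : 0 < γ) (hγ1 : γ < l ^ (n : ℝ)) (hγ2 : γ < (l / K) ^ P) :
    ∫ y : EuclideanSpace ℝ (Fin 3), max (γ - ∏ i, ‖y - x i‖ ^ (p i)) 0 ^ (4 : ℕ) ≤
      (n : ℝ) * K ^ (3 : ℕ) * γ ^ (4 + 3 / P) *
        ∫ y in {y : EuclideanSpace ℝ (Fin 3) | ‖y‖ ≤ 1}, (1 - ‖y‖ ^ P) ^ (4 : ℕ) := by
  obtain ⟨iP, hPeq⟩ := hPmem
  obtain ⟨iK, hKeq⟩ := hKmem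
  have hP : 0 < P := hPeq ▸ hp iP
  have hn1 : (1 : ℝ) ≤ (n : ℝ) := by exact_mod_cast hn
  have hK1 : 1 ≤ K := by
    rw [hKeq]
    exact Real.one_le_rpow_of_pos_of_le_one_of_nonpos hl0 hl1.le
      (div_nonpos_of_nonpos_of_nonneg (by linarith) (hp iK).le)
  have hK0 : 0 < K := lt_of_lt_of_le one_pos hK1
  set R : ℝ := K * γ ^ (1 / P) with hRdef
  have hγP : 0 < γ ^ (1 / P) := Real.rpow_pos_of_pos hγ0 _
  have hR0 : 0 < R := mul_pos hK0 hγP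
  set V : EuclideanSpace ℝ (Fin 3) → ℝ := fun y => ∏ i, ‖y - x i‖ ^ (p i) with hVdef
  have hV0 : ∀ y, 0 ≤ V y := fun y =>
    Finset.prod_nonneg fun i _ => Real.rpow_nonneg (norm_nonneg _) _
  -- the key lower bound on V on each ball
  have key : ∀ (i : Fin n) (y), ‖y - x i‖ ^ (p i) ≤ l → (‖y - x i‖ / K) ^ P ≤ V y := by
    intro i y hyi
    set r := ‖y - x i‖ with hr
    have hr0 : 0 ≤ r := norm_nonneg _
    have hr1 : r ≤ 1 := by
      by_contra h
      push_neg at h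
      have h2 : 1 < r ^ (p i) :=
        (Real.one_lt_rpow_iff_of_pos (lt_trans one_pos h)).2 (Or.inl ⟨h, hp i⟩)
      linarith
    have hother : ∀ j, j ≠ i → l ≤ ‖y - x j‖ ^ (p j) := by
      intro j hj
      by_contra h
      push_neg at h
      exact (Set.disjoint_left.mp (hdisj i j (Ne.symm hj)) hyi h.le).elim
    have hcast : l ^ ((n : ℝ) - 1) = l ^ (n - 1 : ℕ) := by
      rw [← Real.rpow_natCast l (n - 1)]
      congr 1
      push_cast [Nat.cast_sub hn]
      ring
    have h1 : (l : ℝ) ^ (n - 1 : ℕ) ≤ ∏ j ∈ Finset.univ.erase i, ‖y - x j‖ ^ (p j) := by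
      have hcard : (Finset.univ.erase i).card = n - 1 := by
        rw [Finset.card_erase_of_mem (Finset.mem_univ i), Finset.card_univ, Fintype.card_fin]
      calc (l : ℝ) ^ (n - 1 : ℕ) = ∏ _j ∈ Finset.univ.erase i, l := by
            rw [Finset.prod_const, hcard]
        _ ≤ ∏ j ∈ Finset.univ.erase i, ‖y - x j‖ ^ (p j) :=
            Finset.prod_le_prod (fun j _ => hl0.le)
              (fun j hj => hother j (Finset.ne_of_mem_erase hj))
    have hprod : r ^ (p i) * l ^ ((n : ℝ) - 1) ≤ V y := by
      calc r ^ (p i) * l ^ ((n : ℝ) - 1)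
          ≤ r ^ (p i) * ∏ j ∈ Finset.univ.erase i, ‖y - x j‖ ^ (p j) := by
            apply mul_le_mul_of_nonneg_left _ (Real.rpow_nonneg hr0 _)
            rw [hcast]; exact h1
        _ = V y := by
            rw [hVdef]
            exact Finset.mul_prod_erase Finset.univ (fun j => ‖y - x j‖ ^ p j)
              (Finset.mem_univ i)
    have hKP : l ^ ((1 : ℝ) - (n : ℝ)) ≤ K ^ P := by
      calc l ^ ((1 : ℝ) - (n : ℝ)) = (l ^ ((1 - (n : ℝ)) / p i)) ^ (p i) := by
            rw [← Real.rpow_mul hl0.le, div_mul_cancel₀ _ (hp i).ne']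
        _ ≤ K ^ (p i) :=
            Real.rpow_le_rpow (Real.rpow_nonneg hl0.le _) (hKub i) (hp i).le
        _ ≤ K ^ P := Real.rpow_le_rpow_of_exponent_le hK1 (hPub i)
    have hrP : r ^ P ≤ r ^ (p i) := by
      rcases eq_or_lt_of_le hr0 with h0 | h0
      · rw [← h0, Real.zero_rpow hP.ne', Real.zero_rpow (hp i).ne']
      · exact Real.rpow_le_rpow_of_exponent_ge h0 hr1 (hPub i)
    have hKinv : (K ^ P)⁻¹ ≤ l ^ ((n : ℝ) - 1) := by
      have h2 : 0 < l ^ ((1 : ℝ) - (n : ℝ)) := Real.rpow_pos_of_pos hl0 _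
      have h3 := inv_anti₀ h2 hKP
      rwa [← Real.rpow_neg hl0.le, neg_sub] at h3
    calc (r / K) ^ P = r ^ P * (K ^ P)⁻¹ := by
          rw [Real.div_rpow hr0 hK0.le, div_eq_mul_inv]
      _ ≤ r ^ (p i) * l ^ ((n : ℝ) - 1) :=
          mul_le_mul hrP hKinv (inv_nonneg.2 (Real.rpow_nonneg hK0.le _))
            (Real.rpow_nonneg hr0 _)
      _ ≤ V y := hprod
  -- covering: if V y ≤ γ then y is in one of the balls
  have cover : ∀ y, V y ≤ γ → ∃ i, ‖y - x i‖ ^ (p i) ≤ l := by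
    intro y hy
    by_contra h
    push_neg at h
    have h1 : l ^ (n : ℝ) ≤ V y := by
      rw [Real.rpow_natCast]
      calc (l : ℝ) ^ n = ∏ _j : Fin n, l := by
            rw [Finset.prod_const, Finset.card_univ, Fintype.card_fin]
        _ ≤ V y := Finset.prod_le_prod (fun j _ => hl0.le) (fun j _ => (h j).le)
    linarith
  -- the comparison functions
  set φ : ℝ → ℝ := fun t => max (γ - (t / K) ^ P) 0 ^ (4 : ℕ) with hφdef
  have hφcont : Continuous φ := by
    have h1 : Continuous fun t : ℝ => t ^ P := by
      rw [continuous_iff_continuousAt]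
      intro t
      exact Real.continuousAt_rpow_const t P (Or.inr hP.le)
    exact ((continuous_const.sub (h1.comp (continuous_id.div_const K))).max
      continuous_const).pow 4
  have hφnn : ∀ t, 0 ≤ φ t := fun t => pow_nonneg (le_max_right _ _) _
  set g : Fin n → EuclideanSpace ℝ (Fin 3) → ℝ :=
    fun i => (Metric.closedBall (x i) R).indicator (fun y => φ ‖y - x i‖) with hgdef
  have hgnn : ∀ i y, 0 ≤ g i y := fun i y =>
    Set.indicator_nonneg (fun y _ => hφnn _) y
  have hcont2 : ∀ i : Fin n,
      Continuous fun y : EuclideanSpace ℝ (Fin 3) => φ ‖y - x i‖ := fun i =>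
    hφcont.comp ((continuous_id.sub continuous_const).norm)
  have hg_int : ∀ i, Integrable (g i) := by
    intro i
    rw [hgdef]
    exact (integrable_indicator_iff measurableSet_closedBall).2
      ((hcont2 i).continuousOn.integrableOn_compact (isCompact_closedBall _ _))
  have hsum_int : Integrable (fun y => ∑ i, g i y) := by
    apply integrable_finset_sum
    intro i _
    exact hg_int i
  -- pointwise bound
  have hpt : ∀ y, max (γ - V y) 0 ^ (4 : ℕ) ≤ ∑ i, g i y := by
    intro y
    rcases le_or_gt (V y) γ with hy | hy
    · obtain ⟨i, hi⟩ := cover y hy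
      have h1 : (‖y - x i‖ / K) ^ P ≤ V y := key i y hi
      have h2 : ‖y - x i‖ ≤ R := by
        have h3 : (‖y - x i‖ / K) ^ P ≤ γ := h1.trans hy
        have h4 : ‖y - x i‖ / K ≤ γ ^ (1 / P) := by
          have hd0 : (0 : ℝ) ≤ ‖y - x i‖ / K := div_nonneg (norm_nonneg _) hK0.le
          have h5 := Real.rpow_le_rpow (Real.rpow_nonneg hd0 _) h3
            (by positivity : (0 : ℝ) ≤ 1 / P)
          rwa [← Real.rpow_mul hd0, mul_one_div, div_self hP.ne', Real.rpow_one] at h5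
        calc ‖y - x i‖ = (‖y - x i‖ / K) * K := (div_mul_cancel₀ _ hK0.ne').symm
          _ ≤ γ ^ (1 / P) * K := mul_le_mul_of_nonneg_right h4 hK0.le
          _ = R := mul_comm _ _
      have h6 : max (γ - V y) 0 ^ (4 : ℕ) ≤ g i y := by
        have hmem : y ∈ Metric.closedBall (x i) R := by
          rw [Metric.mem_closedBall, dist_eq_norm]; exact h2
        rw [hgdef]
        simp only [Set.indicator_of_mem hmem]
        exact pow_le_pow_left₀ (le_max_right _ _)
          (max_le_max (sub_le_sub_left h1 γ) le_rfl) 4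
      calc max (γ - V y) 0 ^ (4 : ℕ) ≤ g i y := h6
        _ ≤ ∑ j, g j y := Finset.single_le_sum (fun j _ => hgnn j y) (Finset.mem_univ i)
    · rw [max_eq_right (by linarith : γ - V y ≤ 0)]
      rw [zero_pow (by norm_num : (4 : ℕ) ≠ 0)]
      exact Finset.sum_nonneg fun j _ => hgnn j y
  -- integrability of the LHS
  have hrpowc : ∀ q : ℝ, 0 < q → Continuous fun t : ℝ => t ^ q := by
    intro q hq
    rw [continuous_iff_continuousAt]
    intro t
    exact Real.continuousAt_rpow_const t q (Or.inr hq.le)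
  have hVmeas : Measurable V := by
    rw [hVdef]
    apply Continuous.measurable
    apply continuous_finset_prod
    intro i _
    exact (hrpowc (p i) (hp i)).comp ((continuous_id.sub continuous_const).norm)
  have hf_meas : Measurable fun y => max (γ - V y) 0 ^ (4 : ℕ) :=
    ((measurable_const.sub hVmeas).max measurable_const).pow_const 4
  have hf_int : Integrable (fun y => max (γ - V y) 0 ^ (4 : ℕ)) := by
    apply hsum_int.mono' hf_meas.aestronglyMeasurable
    filter_upwards with y
    rw [Real.norm_eq_abs, abs_of_nonneg (pow_nonneg (le_max_right _ _) _)]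
    exact hpt y
  -- the set {‖y‖ ≤ 1} is the closed unit ball
  have hset : {y : EuclideanSpace ℝ (Fin 3) | ‖y‖ ≤ 1} = Metric.closedBall 0 1 := by
    ext y; simp [Metric.mem_closedBall, dist_zero_right]
  set I : ℝ := ∫ y in {y : EuclideanSpace ℝ (Fin 3) | ‖y‖ ≤ 1}, (1 - ‖y‖ ^ P) ^ (4 : ℕ)
    with hIdef
  -- compute the integral of each g i
  have hGi : ∀ i, ∫ y, g i y = K ^ (3 : ℕ) * γ ^ (4 + 3 / P) * I := by
    intro i
    set G : EuclideanSpace ℝ (Fin 3) → ℝ :=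
      (Metric.closedBall (0 : EuclideanSpace ℝ (Fin 3)) R).indicator (fun y => φ ‖y‖)
      with hGdef
    have hgi : ∀ y, g i y = G (y - x i) := by
      intro y
      rw [hgdef, hGdef]
      by_cases hy : y ∈ Metric.closedBall (x i) R
      · have hy2 : y - x i ∈ Metric.closedBall (0 : EuclideanSpace ℝ (Fin 3)) R := by
          rw [Metric.mem_closedBall, dist_zero_right]
          rw [Metric.mem_closedBall, dist_eq_norm] at hy
          exact hy
        simp only [Set.indicator_of_mem hy, Set.indicator_of_mem hy2]
      · have hy2 : y - x i ∉ Metric.closedBall (0 : EuclideanSpace ℝ (Fin 3)) R := by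
          rw [Metric.mem_closedBall, dist_zero_right]
          rw [Metric.mem_closedBall, dist_eq_norm] at hy
          exact hy
        simp only [Set.indicator_of_notMem hy, Set.indicator_of_notMem hy2]
    have htrans : ∫ y, g i y = ∫ y, G y := by
      simp_rw [hgi]
      exact integral_sub_right_eq_self G (x i)
    have hsmul : ∀ z : EuclideanSpace ℝ (Fin 3),
        G (R • z) = ({y : EuclideanSpace ℝ (Fin 3) | ‖y‖ ≤ 1}).indicator
          (fun z => φ (R * ‖z‖)) z := by
      intro z
      rw [hGdef]
      have hnorm : ‖R • z‖ = R * ‖z‖ := by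
        rw [norm_smul, Real.norm_eq_abs, abs_of_pos hR0]
      by_cases hz : ‖z‖ ≤ 1
      · have hz2 : R • z ∈ Metric.closedBall (0 : EuclideanSpace ℝ (Fin 3)) R := by
          rw [Metric.mem_closedBall, dist_zero_right, hnorm]
          exact (mul_le_iff_le_one_right hR0).2 hz
        rw [Set.indicator_of_mem hz2,
          Set.indicator_of_mem (show z ∈ {y : EuclideanSpace ℝ (Fin 3) | ‖y‖ ≤ 1} from hz),
          hnorm]
      · have hz2 : R • z ∉ Metric.closedBall (0 : EuclideanSpace ℝ (Fin 3)) R := by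
          rw [Metric.mem_closedBall, dist_zero_right, hnorm]
          intro hc
          exact hz ((mul_le_iff_le_one_right hR0).1 hc)
        rw [Set.indicator_of_notMem hz2,
          Set.indicator_of_notMem
            (show z ∉ {y : EuclideanSpace ℝ (Fin 3) | ‖y‖ ≤ 1} from hz)]
    have hscale : ∫ y, G y = R ^ (3 : ℕ) * ∫ z, G (R • z) := by
      have h := MeasureTheory.Measure.integral_comp_smul_of_nonneg
        (volume : Measure (EuclideanSpace ℝ (Fin 3))) G R (hR := hR0.le)
      rw [finrank_euclideanSpace_fin] at h
      rw [h, smul_eq_mul]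
      field_simp
    have hval : ∀ z : EuclideanSpace ℝ (Fin 3), ‖z‖ ≤ 1 →
        φ (R * ‖z‖) = γ ^ (4 : ℕ) * (1 - ‖z‖ ^ P) ^ (4 : ℕ) := by
      intro z hz
      rw [hφdef]
      have harg : R * ‖z‖ / K = γ ^ (1 / P) * ‖z‖ := by
        rw [hRdef]; field_simp
      have hpow : (γ ^ (1 / P) * ‖z‖) ^ P = γ * ‖z‖ ^ P := by
        rw [Real.mul_rpow (Real.rpow_nonneg hγ0.le _) (norm_nonneg _),
          ← Real.rpow_mul hγ0.le, one_div_mul_cancel hP.ne', Real.rpow_one]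
      have hle : ‖z‖ ^ P ≤ 1 := Real.rpow_le_one (norm_nonneg _) hz hP.le
      have hmax : max (γ - γ * ‖z‖ ^ P) 0 = γ * (1 - ‖z‖ ^ P) := by
        rw [max_eq_left]
        · ring
        · nlinarith
      simp only [harg, hpow, hmax]
      rw [mul_pow]
    have hind : ∫ z, ({y : EuclideanSpace ℝ (Fin 3) | ‖y‖ ≤ 1}).indicator
        (fun z => φ (R * ‖z‖)) z = γ ^ (4 : ℕ) * I := by
      rw [hset, integral_indicator measurableSet_closedBall]
      rw [hIdef, hset]
      rw [← integral_const_mul]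
      apply setIntegral_congr_fun measurableSet_closedBall
      intro z hz
      rw [Metric.mem_closedBall, dist_zero_right] at hz
      exact hval z hz
    have hfinal : ∫ y, g i y = R ^ (3 : ℕ) * (γ ^ (4 : ℕ) * I) := by
      rw [htrans, hscale]
      congr 1
      rw [← hind]
      exact integral_congr_ae (Filter.Eventually.of_forall hsmul)
    rw [hfinal, hRdef]
    have hRexp : (K * γ ^ (1 / P)) ^ (3 : ℕ) * (γ ^ (4 : ℕ) * I)
        = K ^ (3 : ℕ) * γ ^ (4 + 3 / P) * I := by
      have h1 : (γ ^ (1 / P)) ^ (3 : ℕ) = γ ^ (3 / P) := by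
        rw [← Real.rpow_natCast (γ ^ (1 / P)) 3, ← Real.rpow_mul hγ0.le]
        congr 1
        ring
      have h2 : γ ^ (3 / P) * γ ^ (4 : ℕ) = γ ^ (4 + 3 / P) := by
        rw [← Real.rpow_natCast γ 4, ← Real.rpow_add hγ0]
        congr 1
        ring
      rw [mul_pow, h1]
      calc K ^ (3 : ℕ) * γ ^ (3 / P) * (γ ^ (4 : ℕ) * I)
          = K ^ (3 : ℕ) * (γ ^ (3 / P) * γ ^ (4 : ℕ)) * I := by ring
        _ = K ^ (3 : ℕ) * γ ^ (4 + 3 / P) * I := by rw [h2]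
    exact hRexp
  -- put it all together
  calc ∫ y : EuclideanSpace ℝ (Fin 3), max (γ - V y) 0 ^ (4 : ℕ)
      ≤ ∫ y, ∑ i, g i y := integral_mono hf_int hsum_int hpt
    _ = ∑ i, ∫ y, g i y := integral_finset_sum _ fun i _ => hg_int i
    _ = ∑ _i : Fin n, K ^ (3 : ℕ) * γ ^ (4 + 3 / P) * I := by
        apply Finset.sum_congr rfl
        intro i _
        exact hGi i
    _ = (n : ℝ) * K ^ (3 : ℕ) * γ ^ (4 + 3 / P) * I := by
        rw [Finset.sum_const, Finset.card_univ, Fintype.card_fin, nsmul_eq_mul]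
        ring
end

section
/- Let $\rho \in L^1(\mathbb{R}^3)$ be nonnegative and radially symmetric. Then for every $x \neq 0$, $(|\cdot|^{-1} * \rho)(x) = \int_{\mathbb{R}^3} \frac{\rho(y)}{|x - y|}\,dy \leq \frac{1}{|x|}\int_{\mathbb{R}^3}\rho(y)\,dy$. -/
open MeasureTheory

namespace NewtonProofAux
open Set Real
open scoped ENNReal

noncomputable section

lemma lintegral_image_1d {s : Set ℝ} {f f' : ℝ → ℝ} (hs : MeasurableSet s)
    (hf' : ∀ x ∈ s, HasDerivWithinAt f (f' x) s x) (hf : Set.InjOn f s) (g : ℝ → ℝ≥0∞) :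
    ∫⁻ x in f '' s, g x = ∫⁻ x in s, ENNReal.ofReal |f' x| * g (f x) := by
  simpa only [ContinuousLinearMap.det_toSpanSingleton] using
    lintegral_image_eq_lintegral_abs_det_fderiv_mul volume hs
      (fun x hx => (hf' x hx).hasFDerivWithinAt) hf g

lemma lintegral_comp_polarCoord_symm (g : ℝ × ℝ → ℝ≥0∞) :
    ∫⁻ p in polarCoord.target, ENNReal.ofReal p.1 * g (polarCoord.symm p) = ∫⁻ p, g p := by
  set B : ℝ × ℝ → ℝ × ℝ →L[ℝ] ℝ × ℝ := fun p =>
    LinearMap.toContinuousLinearMap (Matrix.toLin (Module.Basis.finTwoProd ℝ) (Module.Basis.finTwoProd ℝ)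
      !![cos p.2, -p.1 * sin p.2; sin p.2, p.1 * cos p.2])
  have B_det : ∀ p, (B p).det = p.1 := by
    intro p
    conv_rhs => rw [← one_mul p.1, ← cos_sq_add_sin_sq p.2]
    simp only [B, neg_mul, LinearMap.det_toContinuousLinearMap, LinearMap.det_toLin,
      Matrix.det_fin_two_of, sub_neg_eq_add]
    ring
  symm
  calc
    ∫⁻ p, g p = ∫⁻ p in polarCoord.source, g p := by
      rw [← setLIntegral_univ]
      exact (setLIntegral_congr polarCoord_source_ae_eq_univ).symm
    _ = ∫⁻ p in polarCoord.target, ENNReal.ofReal |(B p).det| * g (polarCoord.symm p) := by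
      rw [← polarCoord.symm_image_target_eq_source]
      exact lintegral_image_eq_lintegral_abs_det_fderiv_mul volume
        polarCoord.open_target.measurableSet
        (fun p hp => (hasFDerivAt_polarCoord_symm p).hasFDerivWithinAt)
        polarCoord.symm.injOn g
    _ = ∫⁻ p in polarCoord.target, ENNReal.ofReal p.1 * g (polarCoord.symm p) := by
      refine setLIntegral_congr_fun polarCoord.open_target.measurableSet
        (fun p hp => ?_)
      rw [B_det, abs_of_pos hp.1]


lemma sqrt_deriv_lemma {t : ℝ} {s : ℝ} (hs : s ∈ Ioi |t|) :
    HasDerivAt (fun s => Real.sqrt (s^2 - t^2)) (s / Real.sqrt (s^2 - t^2)) s := by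
  have hts : 0 ≤ |t| := abs_nonneg t
  have h0 : 0 < s := lt_of_le_of_lt hts hs
  have hX : 0 < s^2 - t^2 := by nlinarith [sq_abs t, hs.out, abs_nonneg t]
  have h1 : HasDerivAt (fun s : ℝ => s^2 - t^2) (2*s) s := by
    simpa using ((hasDerivAt_pow 2 s).sub_const (t^2))
  have h2 := (Real.hasDerivAt_sqrt (ne_of_gt hX)).comp s h1
  refine h2.congr_deriv ?_
  have hXs : Real.sqrt (s^2 - t^2) ≠ 0 := ne_of_gt (Real.sqrt_pos.mpr hX)
  field_simp

lemma sqrt_mono_lemma {t : ℝ} : InjOn (fun s => Real.sqrt (s^2 - t^2)) (Ioi |t|) := by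
  have : StrictMonoOn (fun s => Real.sqrt (s^2 - t^2)) (Ioi |t|) := by
    intro s1 h1 s2 h2 h12
    have h0 : (0:ℝ) ≤ |t| := abs_nonneg t
    have hs1 : 0 < s1 := lt_of_le_of_lt h0 h1
    apply Real.sqrt_lt_sqrt
    · nlinarith [sq_abs t, h1.out]
    · nlinarith
  exact this.injOn

lemma sqrt_image_lemma {t : ℝ} : (fun s => Real.sqrt (s^2 - t^2)) '' (Ioi |t|) = Ioi 0 := by
  ext r
  constructor
  · rintro ⟨s, hs, rfl⟩
    have h0 : (0:ℝ) ≤ |t| := abs_nonneg t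
    have hX : 0 < s^2 - t^2 := by nlinarith [sq_abs t, hs.out]
    exact Real.sqrt_pos.mpr hX
  · intro hr
    refine ⟨Real.sqrt (t^2 + r^2), ?_, ?_⟩
    · have : |t| < Real.sqrt (t^2 + r^2) := by
        rw [show t^2 + r^2 = |t|^2 + r^2 by rw [sq_abs]]
        refine (Real.lt_sqrt (by positivity)).mpr ?_
        nlinarith [hr.out]
      exact this
    · have h1 : (0:ℝ) ≤ t^2 + r^2 := by positivity
      show Real.sqrt ((Real.sqrt (t^2+r^2))^2 - t^2) = r
      rw [Real.sq_sqrt h1, show t^2 + r^2 - t^2 = r^2 by ring, Real.sqrt_sq hr.out.le]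

lemma subst_sqrt (t : ℝ) (g : ℝ → ℝ≥0∞) :
    ∫⁻ r in Ioi (0:ℝ), ENNReal.ofReal r * g (Real.sqrt (t^2 + r^2))
      = ∫⁻ s in Ioi |t|, ENNReal.ofReal s * g s := by
  have key := lintegral_image_1d (f := fun s => Real.sqrt (s^2 - t^2))
    (f' := fun s => s / Real.sqrt (s^2 - t^2)) measurableSet_Ioi
    (fun s hs => (sqrt_deriv_lemma hs).hasDerivWithinAt) sqrt_mono_lemma
    (fun r => ENNReal.ofReal r * g (Real.sqrt (t^2 + r^2)))
  rw [sqrt_image_lemma] at key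
  rw [key]
  refine setLIntegral_congr_fun measurableSet_Ioi (fun s hs => ?_)
  have h0 : (0:ℝ) ≤ |t| := abs_nonneg t
  have hs0 : 0 < s := lt_of_le_of_lt h0 hs
  have hX : 0 < s^2 - t^2 := by nlinarith [sq_abs t, hs.out]
  have hXs : 0 < Real.sqrt (s^2 - t^2) := Real.sqrt_pos.mpr hX
  have e1 : t^2 + Real.sqrt (s^2 - t^2)^2 = s^2 := by
    rw [Real.sq_sqrt hX.le]; ring
  rw [e1, Real.sqrt_sq hs0.le]
  rw [abs_of_nonneg (by positivity : (0:ℝ) ≤ s / Real.sqrt (s^2 - t^2))]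
  rw [← mul_assoc, ← ENNReal.ofReal_mul (by positivity)]
  rw [div_mul_cancel₀ _ (ne_of_gt hXs)]

lemma comp_aemeas (t : ℝ) {g : ℝ → ℝ≥0∞}
    (hg : AEMeasurable g (volume.restrict (Ioi |t|))) :
    AEMeasurable (fun r => g (Real.sqrt (t^2 + r^2))) (volume.restrict (Ioi (0:ℝ))) := by
  set φ : ℝ → ℝ := fun r => Real.sqrt (t^2 + r^2) with hφ
  set ψ : ℝ → ℝ := fun s => Real.sqrt (s^2 - t^2) with hψ
  have hφIoi : ∀ r : ℝ, 0 < r → φ r ∈ Ioi |t| := by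
    intro r hr
    have : |t| < Real.sqrt (t^2 + r^2) := by
      rw [show t^2 + r^2 = |t|^2 + r^2 by rw [sq_abs]]
      exact (Real.lt_sqrt (by positivity)).mpr (by nlinarith)
    exact this
  have hψφ : ∀ r : ℝ, 0 < r → ψ (φ r) = r := by
    intro r hr
    have h1 : (0:ℝ) ≤ t^2 + r^2 := by positivity
    simp only [hψ, hφ]
    rw [Real.sq_sqrt h1, show t^2 + r^2 - t^2 = r^2 by ring, Real.sqrt_sq hr.le]
  obtain ⟨G, hGm, hae⟩ := hg
  have hae' : ∀ᵐ s ∂(volume : Measure ℝ), s ∈ Ioi |t| → g s = G s :=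
    (ae_restrict_iff' measurableSet_Ioi).mp hae
  set N : Set ℝ := {s | ¬ (s ∈ Ioi |t| → g s = G s)} with hN
  have hNnull : volume N = 0 := hae'
  set B := toMeasurable volume N with hB
  have hBnull : volume B = 0 := by rw [hB, measure_toMeasurable]; exact hNnull
  have hBmeas : MeasurableSet B := measurableSet_toMeasurable _ _
  -- image of the bad set under ψ is null
  have himg : volume (ψ '' (B ∩ Ioi |t|)) = 0 := by
    have key := lintegral_image_1d (f := ψ) (f' := fun s => s / Real.sqrt (s^2 - t^2))
      (hBmeas.inter measurableSet_Ioi)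
      (fun s hs => (sqrt_deriv_lemma hs.2).hasDerivWithinAt.mono inter_subset_right)
      (sqrt_mono_lemma.mono inter_subset_right) (fun _ => 1)
    have h0 : volume.restrict (B ∩ Ioi |t|) = 0 :=
      Measure.restrict_eq_zero.mpr (measure_mono_null inter_subset_left hBnull)
    rw [h0] at key
    simp only [lintegral_zero_measure] at key
    calc volume (ψ '' (B ∩ Ioi |t|)) = ∫⁻ _ in ψ '' (B ∩ Ioi |t|), 1 := by
          rw [setLIntegral_one]
      _ = 0 := key
  refine ⟨fun r => G (φ r), hGm.comp (by fun_prop), ?_⟩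
  rw [Filter.EventuallyEq, ae_restrict_iff' measurableSet_Ioi]
  have hsub : {r : ℝ | ¬ (r ∈ Ioi (0:ℝ) → g (φ r) = G (φ r))} ⊆ ψ '' (B ∩ Ioi |t|) := by
    intro r hr
    simp only [mem_setOf_eq, Classical.not_imp] at hr
    obtain ⟨hr0, hne⟩ := hr
    have hmem : φ r ∈ B ∩ Ioi |t| := by
      refine ⟨subset_toMeasurable _ _ ?_, hφIoi r hr0⟩
      simp only [hN, mem_setOf_eq, Classical.not_imp]
      exact ⟨hφIoi r hr0, hne⟩
    exact ⟨φ r, hmem, hψφ r hr0⟩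
  exact measure_mono_null hsub himg


lemma key_bound {a s : ℝ} (ha : 0 < a) (hs : 0 < s) (hsa : s ≠ a) :
    ∫⁻ t in Ioo (-s) s, (ENNReal.ofReal (Real.sqrt (a^2 + s^2 - 2*a*t)))⁻¹
      ≤ ENNReal.ofReal (2*s/a) := by
  have hpos : ∀ t ∈ Icc (-s) s, 0 < a^2 + s^2 - 2*a*t := by
    intro t ht
    have h1 : t ≤ s := ht.2
    have h2 : (a - s)^2 > 0 := by
      have : a - s ≠ 0 := sub_ne_zero.mpr (Ne.symm hsa)
      positivity
    nlinarith
  set k : ℝ → ℝ := fun t => (Real.sqrt (a^2 + s^2 - 2*a*t))⁻¹ with hk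
  have hkcont : ContinuousOn k (Icc (-s) s) := by
    apply ContinuousOn.inv₀
    · exact (continuous_const.sub (continuous_const.mul continuous_id)).continuousOn.sqrt
    · intro t ht
      exact ne_of_gt (Real.sqrt_pos.mpr (hpos t ht))
  have hkint : IntegrableOn k (Ioo (-s) s) := by
    exact (hkcont.integrableOn_compact isCompact_Icc).mono_set Ioo_subset_Icc_self
  have hknn : ∀ t, 0 ≤ k t := fun t => inv_nonneg.mpr (Real.sqrt_nonneg _)
  -- rewrite ENNReal integrand
  have step1 : ∫⁻ t in Ioo (-s) s, (ENNReal.ofReal (Real.sqrt (a^2 + s^2 - 2*a*t)))⁻¹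
      = ∫⁻ t in Ioo (-s) s, ENNReal.ofReal (k t) := by
    refine setLIntegral_congr_fun measurableSet_Ioo (fun t ht => ?_)
    rw [← ENNReal.ofReal_inv_of_pos (Real.sqrt_pos.mpr (hpos t (Ioo_subset_Icc_self ht)))]
  have step2 : ∫⁻ t in Ioo (-s) s, ENNReal.ofReal (k t) = ENNReal.ofReal (∫ t in Ioo (-s) s, k t) := by
    rw [← ofReal_integral_eq_lintegral_ofReal hkint
      (Filter.Eventually.of_forall fun t => hknn t)]
  rw [step1, step2]
  apply ENNReal.ofReal_le_ofReal
  -- now a real computation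
  have hss : -s ≤ s := by linarith
  have hval : ∫ t in Ioo (-s) s, k t = (a + s)/a - |a - s|/a := by
    rw [← integral_Ioc_eq_integral_Ioo, ← intervalIntegral.integral_of_le hss]
    have hderiv : ∀ t ∈ uIcc (-s) s,
        HasDerivAt (fun t => -(1/a) * Real.sqrt (a^2 + s^2 - 2*a*t)) (k t) t := by
      intro t ht
      rw [uIcc_of_le hss] at ht
      have hX := hpos t ht
      have h1 : HasDerivAt (fun t : ℝ => a^2 + s^2 - 2*a*t) (-(2*a)) t := by
        simpa using ((hasDerivAt_id t).const_mul (2*a)).const_sub (a^2+s^2)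
      have h2 := (Real.hasDerivAt_sqrt (ne_of_gt hX)).comp t h1
      have h3 := h2.const_mul (-(1/a))
      refine h3.congr_deriv ?_
      have hXs : Real.sqrt (a^2 + s^2 - 2*a*t) ≠ 0 := ne_of_gt (Real.sqrt_pos.mpr hX)
      have ha' : a ≠ 0 := ne_of_gt ha
      simp only [hk]
      field_simp
    have hint : IntervalIntegrable k volume (-s) s := by
      rw [intervalIntegrable_iff_integrableOn_Ioo_of_le hss]
      exact hkint
    rw [intervalIntegral.integral_eq_sub_of_hasDerivAt hderiv hint]
    have e1 : a^2 + s^2 - 2*a*s = (a-s)^2 := by ring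
    have e2 : a^2 + s^2 - 2*a*(-s) = (a+s)^2 := by ring
    rw [e1, e2, Real.sqrt_sq_eq_abs, Real.sqrt_sq_eq_abs, abs_of_pos (by linarith : 0 < a + s)]
    field_simp
    ring
  rw [hval]
  have h2 : (a + s) - |a - s| ≤ 2*s := by
    have := le_abs_self (a - s); linarith
  rw [div_sub_div_same]
  gcongr

lemma swap_lemma (P : ℝ → ℝ≥0∞)
    (hP : AEMeasurable P (volume.restrict (Ioi 0)))
    (hPt : ∀ s, P s ≠ ⊤)
    (w : ℝ → ℝ → ℝ≥0∞) (hw : Measurable (Function.uncurry w)) :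
    ∫⁻ t : ℝ, ∫⁻ s in Ioi |t|, ENNReal.ofReal s * (P s * w t s)
      = ∫⁻ s in Ioi (0:ℝ), ENNReal.ofReal s * P s * ∫⁻ t in Ioo (-s) s, w t s := by
  set S : Set (ℝ × ℝ) := {p : ℝ × ℝ | |p.1| < p.2} with hS
  have hSmeas : MeasurableSet S := measurableSet_lt (measurable_fst.abs) measurable_snd
  set u : ℝ → ℝ → ℝ≥0∞ := fun t s =>
    S.indicator (fun p => ENNReal.ofReal p.2 * (P p.2 * w p.1 p.2)) (t, s) with hu
  -- measurable representative of P
  obtain ⟨P', hP'm, hPae⟩ := hP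
  have hae' : ∀ᵐ s ∂(volume : Measure ℝ), s ∈ Ioi (0:ℝ) → P s = P' s :=
    (ae_restrict_iff' measurableSet_Ioi).mp hPae
  set N : Set ℝ := {s | ¬ (s ∈ Ioi (0:ℝ) → P s = P' s)} with hN
  have hNnull : volume N = 0 := hae'
  set B := toMeasurable volume N with hB
  have hBnull : volume B = 0 := by rw [hB, measure_toMeasurable]; exact hNnull
  have huae : AEMeasurable (Function.uncurry u) ((volume : Measure ℝ).prod volume) := by
    refine ⟨Function.uncurry (fun t s =>
      S.indicator (fun p => ENNReal.ofReal p.2 * (P' p.2 * w p.1 p.2)) (t, s)), ?_, ?_⟩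
    · have : Measurable (S.indicator (fun p : ℝ × ℝ => ENNReal.ofReal p.2 * (P' p.2 * w p.1 p.2))) :=
        Measurable.indicator ((measurable_snd.ennreal_ofReal).mul
          ((hP'm.comp measurable_snd).mul hw)) hSmeas
      exact this
    · have hsub : ∀ p : ℝ × ℝ, p.2 ∉ B → Function.uncurry u p
          = Function.uncurry (fun t s =>
            S.indicator (fun p => ENNReal.ofReal p.2 * (P' p.2 * w p.1 p.2)) (t, s)) p := by
        rintro ⟨t, s⟩ hmem
        show u t s = S.indicator (fun p : ℝ × ℝ => ENNReal.ofReal p.2 * (P' p.2 * w p.1 p.2)) (t, s)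
        simp only [hu]
        by_cases hin : (t, s) ∈ S
        · rw [Set.indicator_of_mem hin, Set.indicator_of_mem hin]
          have hs0 : 0 < s := lt_of_le_of_lt (abs_nonneg t) hin
          have hPs : P s = P' s := by
            by_contra hne
            exact hmem (subset_toMeasurable _ _ (by
              simp only [hN, mem_setOf_eq, Classical.not_imp]; exact ⟨hs0, hne⟩))
          rw [hPs]
        · rw [Set.indicator_of_notMem hin, Set.indicator_of_notMem hin]
      have hnull : ((volume : Measure ℝ).prod volume) ((univ : Set ℝ) ×ˢ B) = 0 := by
        rw [Measure.prod_prod]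
        simp [hBnull]
      refine ae_iff.mpr (measure_mono_null ?_ hnull)
      intro p hp
      simp only [mem_setOf_eq] at hp
      exact Set.mem_prod.mpr ⟨mem_univ _, Classical.byContradiction fun h => hp (hsub p h)⟩
  calc ∫⁻ t : ℝ, ∫⁻ s in Ioi |t|, ENNReal.ofReal s * (P s * w t s)
      = ∫⁻ t : ℝ, ∫⁻ s : ℝ, u t s := by
        refine lintegral_congr fun t => ?_
        rw [← lintegral_indicator measurableSet_Ioi]
        refine lintegral_congr fun s => ?_
        simp only [hu]
        by_cases hmem : s ∈ Ioi |t|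
        · rw [Set.indicator_of_mem hmem, Set.indicator_of_mem (show (t,s) ∈ S from hmem)]
        · rw [Set.indicator_of_notMem hmem,
            Set.indicator_of_notMem (show (t,s) ∉ S from hmem)]
    _ = ∫⁻ s : ℝ, ∫⁻ t : ℝ, u t s := lintegral_lintegral_swap huae
    _ = ∫⁻ s : ℝ, (Ioi (0:ℝ)).indicator
          (fun s => ENNReal.ofReal s * P s * ∫⁻ t in Ioo (-s) s, w t s) s := by
        refine lintegral_congr fun s => ?_
        have inner : ∀ t, u t s
            = (Ioo (-s) s).indicator (fun t => (ENNReal.ofReal s * P s) * w t s) t := by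
          intro t
          simp only [hu]
          by_cases hmem : (t, s) ∈ S
          · rw [Set.indicator_of_mem hmem,
              Set.indicator_of_mem (show t ∈ Ioo (-s) s from abs_lt.mp hmem)]
            rw [mul_assoc]
          · rw [Set.indicator_of_notMem hmem,
              Set.indicator_of_notMem (show t ∉ Ioo (-s) s from fun h => hmem (abs_lt.mpr h))]
        rw [lintegral_congr inner, lintegral_indicator measurableSet_Ioo,
          lintegral_const_mul' _ _ (ENNReal.mul_ne_top ENNReal.ofReal_ne_top (hPt s))]
        by_cases hs : s ∈ Ioi (0:ℝ)
        · rw [Set.indicator_of_mem hs]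
        · rw [Set.indicator_of_notMem hs]
          have hemp : Ioo (-s) s = (∅ : Set ℝ) := by
            apply Ioo_eq_empty
            simp only [mem_Ioi, not_lt] at hs
            intro hlt
            linarith
          rw [hemp]
          simp
    _ = ∫⁻ s in Ioi (0:ℝ), ENNReal.ofReal s * P s * ∫⁻ t in Ioo (-s) s, w t s := by
        rw [lintegral_indicator measurableSet_Ioi]


def n3 (v : ℝ × ℝ × ℝ) : ℝ := Real.sqrt (v.1^2 + v.2.1^2 + v.2.2^2)

lemma core (K : ℝ × ℝ × ℝ → ℝ≥0∞) (P : ℝ → ℝ≥0∞) (hK : AEMeasurable K volume)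
    (hP : AEMeasurable P (volume.restrict (Ioi 0)))
    (hPt : ∀ s, P s ≠ ⊤)
    (hKP : ∀ v, K v = P (n3 v))
    (w : ℝ → ℝ → ℝ≥0∞) (hw : Measurable (Function.uncurry w)) :
    ∫⁻ v, K v * w v.1 (n3 v)
      = ENNReal.ofReal (2*π) *
        ∫⁻ s in Ioi (0:ℝ), ENNReal.ofReal s * P s * ∫⁻ t in Ioo (-s) s, w t s := by
  have hP' : ∀ t : ℝ, AEMeasurable P (volume.restrict (Ioi |t|)) := fun t =>
    hP.mono_measure (Measure.restrict_mono (fun x hx => lt_of_le_of_lt (abs_nonneg t) hx) le_rfl)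
  have hmeas1 : AEMeasurable (fun v : ℝ × ℝ × ℝ => K v * w v.1 (n3 v)) (volume.prod volume) := by
    rw [← Measure.volume_eq_prod]
    refine hK.mul ?_
    have hm : Measurable (fun v : ℝ × ℝ × ℝ => (v.1, n3 v)) := by
      refine measurable_fst.prodMk ?_
      unfold n3; fun_prop
    exact (hw.comp hm).aemeasurable
  have stepa : ∫⁻ v, K v * w v.1 (n3 v)
      = ∫⁻ t, ∫⁻ z : ℝ × ℝ, K (t, z) * w t (n3 (t, z)) := by
    rw [Measure.volume_eq_prod, lintegral_prod _ hmeas1]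
  rw [stepa]
  have inner_eq : ∀ t : ℝ, (∫⁻ z : ℝ × ℝ, K (t, z) * w t (n3 (t, z)))
      = ENNReal.ofReal (2*π) * ∫⁻ s in Ioi |t|, ENNReal.ofReal s * (P s * w t s) := by
    intro t
    set gt : ℝ → ℝ≥0∞ := fun s => P s * w t s with hgt
    have h1 : ∀ z : ℝ × ℝ, K (t, z) * w t (n3 (t, z))
        = gt (Real.sqrt (t^2 + (z.1^2 + z.2^2))) := by
      intro z
      rw [hKP]
      have : n3 (t, z) = Real.sqrt (t^2 + (z.1^2 + z.2^2)) := by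
        unfold n3; ring_nf
      rw [this]
    have hF : AEMeasurable (fun r => ENNReal.ofReal r * gt (Real.sqrt (t^2 + r^2)))
        (volume.restrict (Ioi (0:ℝ))) := by
      refine (Measurable.ennreal_ofReal measurable_id).aemeasurable.mul ?_
      simp only [hgt]
      refine AEMeasurable.mul (comp_aemeas t (hP' t)) ?_
      have : Measurable (fun r : ℝ => w t (Real.sqrt (t^2 + r^2))) := by
        have hm2 : Measurable (fun r : ℝ => (t, Real.sqrt (t^2 + r^2))) := by fun_prop
        exact hw.comp hm2
      exact this.aemeasurable
    calc (∫⁻ z : ℝ × ℝ, K (t, z) * w t (n3 (t, z)))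
        = ∫⁻ z : ℝ × ℝ, gt (Real.sqrt (t^2 + (z.1^2 + z.2^2))) := lintegral_congr h1
      _ = ∫⁻ p in polarCoord.target,
            ENNReal.ofReal p.1 * gt (Real.sqrt (t^2 +
              ((polarCoord.symm p).1^2 + (polarCoord.symm p).2^2))) := by
          rw [lintegral_comp_polarCoord_symm (fun z => gt (Real.sqrt (t^2 + (z.1^2 + z.2^2))))]
      _ = ∫⁻ p in polarCoord.target, ENNReal.ofReal p.1 * gt (Real.sqrt (t^2 + p.1^2)) := by
          refine setLIntegral_congr_fun polarCoord.open_target.measurableSet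
            (fun p hp => ?_)
          have hcs : (polarCoord.symm p).1^2 + (polarCoord.symm p).2^2 = p.1^2 := by
            simp only [polarCoord_symm_apply]
            rw [mul_pow, mul_pow, ← mul_add, cos_sq_add_sin_sq, mul_one]
          rw [hcs]
      _ = ENNReal.ofReal (2*π) * ∫⁻ r in Ioi (0:ℝ),
            ENNReal.ofReal r * gt (Real.sqrt (t^2 + r^2)) := by
          rw [polarCoord_target, Measure.volume_eq_prod, ← Measure.prod_restrict]
          have hFp : AEMeasurable (fun p : ℝ × ℝ =>
              ENNReal.ofReal p.1 * gt (Real.sqrt (t^2 + p.1^2)))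
              ((volume.restrict (Ioi (0:ℝ))).prod (volume.restrict (Ioo (-π) π))) := by
            have hmap := Measure.map_fst_prod (μ := volume.restrict (Ioi (0:ℝ)))
              (ν := volume.restrict (Ioo (-π) π))
            have h2 : AEMeasurable (fun r => ENNReal.ofReal r * gt (Real.sqrt (t^2 + r^2)))
                (Measure.map Prod.fst ((volume.restrict (Ioi (0:ℝ))).prod
                  (volume.restrict (Ioo (-π) π)))) := by
              rw [hmap]
              exact hF.smul_measure _
            exact h2.comp_aemeasurable measurable_fst.aemeasurable
          rw [lintegral_prod _ hFp]
          have hIoo : (volume (Ioo (-π) π)) = ENNReal.ofReal (2*π) := by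
            rw [Real.volume_Ioo]
            congr 1
            ring
          calc ∫⁻ r in Ioi (0:ℝ), ∫⁻ _ in Ioo (-π) π,
                ENNReal.ofReal r * gt (Real.sqrt (t^2 + r^2))
              = ∫⁻ r in Ioi (0:ℝ),
                  (ENNReal.ofReal r * gt (Real.sqrt (t^2 + r^2))) * ENNReal.ofReal (2*π) := by
                refine lintegral_congr fun r => ?_
                rw [setLIntegral_const, hIoo]
            _ = ∫⁻ r in Ioi (0:ℝ),
                  ENNReal.ofReal (2*π) * (ENNReal.ofReal r * gt (Real.sqrt (t^2 + r^2))) := by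
                refine lintegral_congr fun r => mul_comm _ _
            _ = ENNReal.ofReal (2*π) * ∫⁻ r in Ioi (0:ℝ),
                  ENNReal.ofReal r * gt (Real.sqrt (t^2 + r^2)) := by
                rw [lintegral_const_mul' _ _ ENNReal.ofReal_ne_top]
      _ = ENNReal.ofReal (2*π) * ∫⁻ s in Ioi |t|, ENNReal.ofReal s * gt s := by
          rw [subst_sqrt t gt]
  calc ∫⁻ t, ∫⁻ z : ℝ × ℝ, K (t, z) * w t (n3 (t, z))
      = ∫⁻ t, ENNReal.ofReal (2*π) * ∫⁻ s in Ioi |t|, ENNReal.ofReal s * (P s * w t s) :=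
        lintegral_congr inner_eq
    _ = ENNReal.ofReal (2*π) * ∫⁻ t, ∫⁻ s in Ioi |t|, ENNReal.ofReal s * (P s * w t s) := by
        rw [lintegral_const_mul' _ _ ENNReal.ofReal_ne_top]
    _ = ENNReal.ofReal (2*π) *
        ∫⁻ s in Ioi (0:ℝ), ENNReal.ofReal s * P s * ∫⁻ t in Ioo (-s) s, w t s := by
        rw [swap_lemma P hP hPt w hw]


abbrev E3 := EuclideanSpace ℝ (Fin 3)

def Ψ : E3 ≃ᵐ ℝ × ℝ × ℝ :=
  (MeasurableEquiv.toLp 2 (Fin 3 → ℝ)).symm.trans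
    ((MeasurableEquiv.piFinSuccAbove (fun _ : Fin 3 => ℝ) 0).trans
      ((MeasurableEquiv.refl ℝ).prodCongr MeasurableEquiv.finTwoArrow))

lemma Ψ_mp : MeasurePreserving Ψ volume volume := by
  refine (EuclideanSpace.volume_preserving_symm_measurableEquiv_toLp (Fin 3)).trans ?_
  refine (volume_preserving_piFinSuccAbove (fun _ : Fin 3 => ℝ) 0).trans ?_
  exact (MeasurePreserving.id volume).prod (volume_preserving_finTwoArrow ℝ)

lemma Ψ_apply (y : E3) : Ψ y = (y 0, y 1, y 2) := rfl

lemma Ψ_symm_coords (v : ℝ × ℝ × ℝ) :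
    (Ψ.symm v) 0 = v.1 ∧ (Ψ.symm v) 1 = v.2.1 ∧ (Ψ.symm v) 2 = v.2.2 := by
  have h := Ψ_apply (Ψ.symm v)
  rw [Ψ.apply_symm_apply] at h
  exact ⟨congrArg (fun p : ℝ × ℝ × ℝ => p.1) h.symm,
    congrArg (fun p : ℝ × ℝ × ℝ => p.2.1) h.symm,
    congrArg (fun p : ℝ × ℝ × ℝ => p.2.2) h.symm⟩

lemma norm_E3 (y : E3) : ‖y‖ = Real.sqrt (y 0 ^ 2 + y 1 ^ 2 + y 2 ^ 2) := by
  rw [EuclideanSpace.norm_eq, Fin.sum_univ_three]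
  simp [Real.norm_eq_abs, sq_abs]

def e3 : E3 := EuclideanSpace.single (0 : Fin 3) (1:ℝ)

lemma smul_e3_coords (a : ℝ) :
    (a • e3) 0 = a ∧ (a • e3) 1 = 0 ∧ (a • e3) 2 = 0 := by
  refine ⟨?_, ?_, ?_⟩ <;> simp [e3, EuclideanSpace.single_apply]

lemma norm_smul_e3 (a : ℝ) : ‖a • e3‖ = |a| := by
  rw [norm_smul]
  simp [e3, Real.norm_eq_abs]


lemma phi_deriv {t r : ℝ} (hr : 0 < r) :
    HasDerivAt (fun r => Real.sqrt (t^2 + r^2)) (r / Real.sqrt (t^2 + r^2)) r := by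
  have hX : 0 < t^2 + r^2 := by positivity
  have h1 : HasDerivAt (fun r : ℝ => t^2 + r^2) (2*r) r := by
    simpa using ((hasDerivAt_pow 2 r).const_add (t^2))
  have h2 := (Real.hasDerivAt_sqrt (ne_of_gt hX)).comp r h1
  refine h2.congr_deriv ?_
  have hXs : Real.sqrt (t^2 + r^2) ≠ 0 := ne_of_gt (Real.sqrt_pos.mpr hX)
  field_simp

lemma phi_inj {t : ℝ} : InjOn (fun r => Real.sqrt (t^2 + r^2)) (Ioi 0) := by
  have : StrictMonoOn (fun r => Real.sqrt (t^2 + r^2)) (Ioi 0) := by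
    intro r1 h1 r2 h2 h12
    apply Real.sqrt_lt_sqrt (by positivity)
    have h1' : (0:ℝ) < r1 := h1
    nlinarith
  exact this.injOn

-- reverse direction composition
lemma comp_aemeas_rev (t : ℝ) {q : ℝ → ℝ≥0∞}
    (hq : AEMeasurable q (volume.restrict (Ioi (0:ℝ)))) :
    AEMeasurable (fun s => q (Real.sqrt (s^2 - t^2))) (volume.restrict (Ioi |t|)) := by
  set φ : ℝ → ℝ := fun r => Real.sqrt (t^2 + r^2) with hφ
  set ψ : ℝ → ℝ := fun s => Real.sqrt (s^2 - t^2) with hψ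
  have hψIoi : ∀ s : ℝ, |t| < s → 0 < ψ s := by
    intro s hs
    apply Real.sqrt_pos.mpr
    nlinarith [sq_abs t, abs_nonneg t]
  have hφψ : ∀ s : ℝ, |t| < s → φ (ψ s) = s := by
    intro s hs
    have hs0 : 0 < s := lt_of_le_of_lt (abs_nonneg t) hs
    have hX : (0:ℝ) ≤ s^2 - t^2 := by nlinarith [sq_abs t, abs_nonneg t]
    simp only [hφ, hψ]
    rw [Real.sq_sqrt hX, show t^2 + (s^2 - t^2) = s^2 by ring, Real.sqrt_sq hs0.le]
  obtain ⟨Q, hQm, hae⟩ := hq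
  have hae' : ∀ᵐ r ∂(volume : Measure ℝ), r ∈ Ioi (0:ℝ) → q r = Q r :=
    (ae_restrict_iff' measurableSet_Ioi).mp hae
  set N : Set ℝ := {r | ¬ (r ∈ Ioi (0:ℝ) → q r = Q r)} with hN
  have hNnull : volume N = 0 := hae'
  set B := toMeasurable volume N with hB
  have hBnull : volume B = 0 := by rw [hB, measure_toMeasurable]; exact hNnull
  have hBmeas : MeasurableSet B := measurableSet_toMeasurable _ _
  have himg : volume (φ '' (B ∩ Ioi 0)) = 0 := by
    have key := lintegral_image_1d (f := φ) (f' := fun r => r / Real.sqrt (t^2 + r^2))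
      (hBmeas.inter measurableSet_Ioi)
      (fun r hr => (phi_deriv hr.2).hasDerivWithinAt.mono inter_subset_right)
      (phi_inj.mono inter_subset_right) (fun _ => 1)
    have h0 : volume.restrict (B ∩ Ioi 0) = 0 :=
      Measure.restrict_eq_zero.mpr (measure_mono_null inter_subset_left hBnull)
    rw [h0] at key
    simp only [lintegral_zero_measure] at key
    calc volume (φ '' (B ∩ Ioi 0)) = ∫⁻ _ in φ '' (B ∩ Ioi 0), 1 := by rw [setLIntegral_one]
      _ = 0 := key
  refine ⟨fun s => Q (ψ s), hQm.comp (by fun_prop), ?_⟩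
  rw [Filter.EventuallyEq, ae_restrict_iff' measurableSet_Ioi]
  have hsub : {s : ℝ | ¬ (s ∈ Ioi |t| → q (ψ s) = Q (ψ s))} ⊆ φ '' (B ∩ Ioi 0) := by
    intro s hs
    simp only [mem_setOf_eq, Classical.not_imp] at hs
    obtain ⟨hs1, hne⟩ := hs
    have hmem : ψ s ∈ B ∩ Ioi 0 := by
      refine ⟨subset_toMeasurable _ _ ?_, hψIoi s hs1⟩
      simp only [hN, mem_setOf_eq, Classical.not_imp]
      exact ⟨hψIoi s hs1, hne⟩
    exact ⟨ψ s, hmem, hφψ s hs1⟩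
  exact measure_mono_null hsub himg


lemma norm_Ψ_symm (v : ℝ × ℝ × ℝ) :
    ‖Ψ.symm v‖ = Real.sqrt (v.1^2 + v.2.1^2 + v.2.2^2) := by
  obtain ⟨h0, h1, h2⟩ := Ψ_symm_coords v
  rw [norm_E3, h0, h1, h2]

lemma radial_aemeas (ρ : E3 → ℝ) (hm : AEMeasurable ρ volume)
    (hrad : ∀ x y : E3, ‖x‖ = ‖y‖ → ρ x = ρ y) :
    AEMeasurable (fun s => ENNReal.ofReal (ρ (s • e3))) (volume.restrict (Ioi (0:ℝ))) := by
  set P : ℝ → ℝ≥0∞ := fun s => ENNReal.ofReal (ρ (s • e3)) with hPdef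
  obtain ⟨g, hgm, hae⟩ := hm
  have hnull0 : volume {y : E3 | ρ y ≠ g y} = 0 := ae_iff.mp hae
  have hΨmp : MeasurePreserving Ψ.symm volume volume := Ψ_mp.symm Ψ
  have hpre : volume (Ψ.symm ⁻¹' {y : E3 | ρ y ≠ g y}) = 0 :=
    hΨmp.quasiMeasurePreserving.preimage_null hnull0
  set N := toMeasurable volume (Ψ.symm ⁻¹' {y : E3 | ρ y ≠ g y}) with hNdef
  have hNmeas : MeasurableSet N := measurableSet_toMeasurable _ _
  have hNnull : volume N = 0 := by rw [hNdef, measure_toMeasurable]; exact hpre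
  have hgood : ∀ v : ℝ × ℝ × ℝ, v ∉ N → ρ (Ψ.symm v) = g (Ψ.symm v) := by
    intro v hv
    by_contra hne
    exact hv (subset_toMeasurable _ _ hne)
  -- slice in the first coordinate
  have hslice1 : ∀ᵐ t : ℝ, (volume : Measure (ℝ × ℝ)) (Prod.mk t ⁻¹' N) = 0 := by
    rw [Measure.volume_eq_prod] at hNnull
    have := (Measure.measure_prod_null hNmeas).mp hNnull
    exact this.mono fun t h => by simpa using h
  have key : ∀ n : ℕ, AEMeasurable P (volume.restrict (Ioi (1/(n+1:ℝ)))) := by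
    intro n
    have hc : (0:ℝ) < 1/(n+1:ℝ) := by positivity
    haveI hNeBot : (ae (volume.restrict (Ioo (0:ℝ) (1/(n+1:ℝ))))).NeBot := by
      refine ae_neBot.mpr fun h => ?_
      rw [Measure.restrict_eq_zero, Real.volume_Ioo] at h
      simp only [ENNReal.ofReal_eq_zero] at h
      linarith
    obtain ⟨t₀, ht₀slice, ht₀mem⟩ :=
      ((ae_restrict_of_ae hslice1).and (ae_restrict_mem
        (measurableSet_Ioo : MeasurableSet (Ioo (0:ℝ) (1/(n+1:ℝ)))))).exists
    have ht₀pos : 0 < t₀ := ht₀mem.1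
    have ht₀lt : t₀ < 1/(n+1:ℝ) := ht₀mem.2
    set Nt : Set (ℝ × ℝ) := Prod.mk t₀ ⁻¹' N with hNt
    have hNtmeas : MeasurableSet Nt := hNmeas.preimage measurable_prodMk_left
    have hNtnull : volume Nt = 0 := ht₀slice
    -- polar: the preimage of Nt under polarCoord.symm restricted to target is null
    set M : Set (ℝ × ℝ) := {p : ℝ × ℝ | polarCoord.symm p ∈ Nt} ∩ polarCoord.target with hM
    have hcontsymm : Continuous (fun p : ℝ × ℝ => polarCoord.symm p) := by
      have : (fun p : ℝ × ℝ => polarCoord.symm p)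
          = fun p : ℝ × ℝ => (p.1 * cos p.2, p.1 * sin p.2) := by
        funext p; exact polarCoord_symm_apply p
      rw [this]; fun_prop
    have hMmeas : MeasurableSet M :=
      (hNtmeas.preimage hcontsymm.measurable).inter polarCoord.open_target.measurableSet
    have hMnull : volume M = 0 := by
      have h1 : (∫⁻ p in polarCoord.target,
          ENNReal.ofReal p.1 * (Nt.indicator (fun _ => (1:ℝ≥0∞)) (polarCoord.symm p)))
          = ∫⁻ p, Nt.indicator (fun _ => (1:ℝ≥0∞)) p :=
        lintegral_comp_polarCoord_symm _
      rw [lintegral_indicator hNtmeas, setLIntegral_one, hNtnull] at h1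
      have hmeas2 : AEMeasurable (fun p : ℝ × ℝ =>
          ENNReal.ofReal p.1 * (Nt.indicator (fun _ => (1:ℝ≥0∞)) (polarCoord.symm p)))
          (volume.restrict polarCoord.target) := by
        refine Measurable.aemeasurable ?_
        exact (measurable_fst.ennreal_ofReal).mul
          ((measurable_one.indicator hNtmeas).comp hcontsymm.measurable)
      have h2 := (lintegral_eq_zero_iff' hmeas2).mp h1
      have h3 := ae_iff.mp h2
      rw [Measure.restrict_apply₀' polarCoord.open_target.measurableSet.nullMeasurableSet] at h3
      refine measure_mono_null ?_ h3
      rintro ⟨r, θ⟩ ⟨hmem, htar⟩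
      refine ⟨?_, htar⟩
      have hr : (0:ℝ) < r := by
        rw [polarCoord_target] at htar
        exact htar.1
      simp only [mem_setOf_eq, Pi.zero_apply]
      rw [Set.indicator_of_mem (show polarCoord.symm (r, θ) ∈ Nt from hmem), mul_one]
      simp only [ne_eq, ENNReal.ofReal_eq_zero, not_le]
      exact hr
    -- swap to choose θ₀
    have hswapnull : volume (Prod.swap ⁻¹' M) = 0 := by
      rw [Measure.volume_eq_prod]
      rw [Measure.volume_eq_prod] at hMnull
      exact (Measure.measurePreserving_swap.measure_preimage
        hMmeas.nullMeasurableSet).trans hMnull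
    have hslice2 : ∀ᵐ θ : ℝ, (volume : Measure ℝ) {r : ℝ | (r, θ) ∈ M} = 0 := by
      rw [Measure.volume_eq_prod] at hswapnull
      have := (Measure.measure_prod_null
        (hMmeas.preimage measurable_swap)).mp hswapnull
      refine this.mono fun θ h => ?_
      exact h
    haveI hNeBot2 : (ae (volume.restrict (Ioo (-π) π))).NeBot := by
      refine ae_neBot.mpr fun h => ?_
      rw [Measure.restrict_eq_zero, Real.volume_Ioo] at h
      simp only [ENNReal.ofReal_eq_zero] at h
      have := Real.pi_pos
      linarith
    obtain ⟨θ₀, hθ₀slice, hθ₀mem⟩ :=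
      ((ae_restrict_of_ae hslice2).and (ae_restrict_mem
        (measurableSet_Ioo : MeasurableSet (Ioo (-π) π)))).exists
    -- q is a.e. measurable
    set q : ℝ → ℝ≥0∞ := fun r => ENNReal.ofReal (ρ (Real.sqrt (t₀^2 + r^2) • e3)) with hqdef
    have hptnorm : ∀ r : ℝ,
        ρ (Ψ.symm (t₀, polarCoord.symm (r, θ₀))) = ρ (Real.sqrt (t₀^2 + r^2) • e3) := by
      intro r
      apply hrad
      rw [norm_Ψ_symm, norm_smul_e3, polarCoord_symm_apply]
      simp only
      rw [abs_of_nonneg (Real.sqrt_nonneg _)]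
      congr 1
      rw [mul_pow, mul_pow, show t₀^2 + r^2 * cos θ₀^2 + r^2 * sin θ₀^2
        = t₀^2 + r^2 * (cos θ₀^2 + sin θ₀^2) by ring, cos_sq_add_sin_sq, mul_one]
    have hq : AEMeasurable q (volume.restrict (Ioi (0:ℝ))) := by
      refine ⟨fun r => ENNReal.ofReal (g (Ψ.symm (t₀, polarCoord.symm (r, θ₀)))), ?_, ?_⟩
      · refine Measurable.ennreal_ofReal ?_
        refine hgm.comp (Ψ.symm.measurable.comp ?_)
        refine measurable_const.prodMk (hcontsymm.measurable.comp ?_)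
        exact measurable_id.prodMk measurable_const
      · rw [Filter.EventuallyEq, ae_restrict_iff' measurableSet_Ioi]
        have hsub : {r : ℝ | ¬ (r ∈ Ioi (0:ℝ) → q r
            = ENNReal.ofReal (g (Ψ.symm (t₀, polarCoord.symm (r, θ₀)))))}
            ⊆ {r : ℝ | (r, θ₀) ∈ M} := by
          intro r hr
          simp only [mem_setOf_eq, Classical.not_imp] at hr
          obtain ⟨hr0, hne⟩ := hr
          by_contra hnm
          apply hne
          have htar : (r, θ₀) ∈ polarCoord.target := by
            rw [polarCoord_target]
            exact ⟨hr0, hθ₀mem⟩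
          have hnin : polarCoord.symm (r, θ₀) ∉ Nt := by
            intro hin
            exact hnm ⟨hin, htar⟩
          have := hgood (t₀, polarCoord.symm (r, θ₀)) hnin
          rw [hqdef]
          simp only
          rw [← hptnorm r, this]
        exact measure_mono_null hsub hθ₀slice
    -- transfer to P on Ioi |t₀|
    have hPt₀ : AEMeasurable P (volume.restrict (Ioi |t₀|)) := by
      have h1 := comp_aemeas_rev t₀ hq
      refine h1.congr ?_
      rw [Filter.EventuallyEq, ae_restrict_iff' measurableSet_Ioi]
      refine Filter.Eventually.of_forall fun s hs => ?_
      have hs0 : 0 < s := lt_of_le_of_lt (abs_nonneg t₀) hs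
      have hX : (0:ℝ) ≤ s^2 - t₀^2 := by nlinarith [sq_abs t₀, abs_nonneg t₀, hs.out]
      simp only [hqdef, hPdef]
      rw [Real.sq_sqrt hX, show t₀^2 + (s^2 - t₀^2) = s^2 by ring, Real.sqrt_sq hs0.le]
    refine hPt₀.mono_measure (Measure.restrict_mono ?_ le_rfl)
    intro s hs
    have : |t₀| = t₀ := abs_of_pos ht₀pos
    rw [mem_Ioi, this]
    exact lt_trans ht₀lt hs
  have hunion : Ioi (0:ℝ) = ⋃ n : ℕ, Ioi (1/(n+1:ℝ)) := by
    ext s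
    simp only [mem_Ioi, mem_iUnion]
    constructor
    · intro hs
      obtain ⟨n, hn⟩ := exists_nat_one_div_lt hs
      exact ⟨n, hn⟩
    · rintro ⟨n, hn⟩
      have : (0:ℝ) < 1/(n+1:ℝ) := by positivity
      linarith
  rw [hunion]
  exact aemeasurable_iUnion_iff.mpr key


lemma norm_sub_smul (a : ℝ) (v : ℝ × ℝ × ℝ) :
    ‖a • e3 - Ψ.symm v‖ = Real.sqrt (a^2 + (n3 v)^2 - 2*a*v.1) := by
  obtain ⟨h0, h1, h2⟩ := Ψ_symm_coords v
  obtain ⟨g0, g1, g2⟩ := smul_e3_coords a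
  have c0 : (a • e3 - Ψ.symm v) 0 = a - v.1 := by
    simp [PiLp.sub_apply, h0, g0]
  have c1 : (a • e3 - Ψ.symm v) 1 = -v.2.1 := by
    simp [PiLp.sub_apply, h1, g1]
  have c2 : (a • e3 - Ψ.symm v) 2 = -v.2.2 := by
    simp [PiLp.sub_apply, h2, g2]
  rw [norm_E3, c0, c1, c2]
  have hn3 : (n3 v)^2 = v.1^2 + v.2.1^2 + v.2.2^2 :=
    Real.sq_sqrt (by positivity)
  congr 1
  rw [hn3]
  ring

lemma main_ineq (ρ : E3 → ℝ) (hm : AEMeasurable ρ volume) (hnn : ∀ y, 0 ≤ ρ y)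
    (hrad : ∀ x y : E3, ‖x‖ = ‖y‖ → ρ x = ρ y) {a : ℝ} (ha : 0 < a) :
    ∫⁻ y, ENNReal.ofReal (ρ y / ‖a • e3 - y‖)
      ≤ (ENNReal.ofReal a)⁻¹ * ∫⁻ y, ENNReal.ofReal (ρ y) := by
  set K : ℝ × ℝ × ℝ → ℝ≥0∞ := fun v => ENNReal.ofReal (ρ (Ψ.symm v)) with hK
  set P : ℝ → ℝ≥0∞ := fun s => ENNReal.ofReal (ρ (s • e3)) with hPdef
  set w₀ : ℝ → ℝ → ℝ≥0∞ := fun t s =>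
    (ENNReal.ofReal (Real.sqrt (a^2 + s^2 - 2*a*t)))⁻¹ with hw₀
  have hΨsmp : MeasurePreserving Ψ.symm volume volume := Ψ_mp.symm Ψ
  have hKae : AEMeasurable K volume := by
    refine AEMeasurable.ennreal_ofReal ?_
    refine AEMeasurable.comp_aemeasurable ?_ Ψ.symm.measurable.aemeasurable
    rw [hΨsmp.map_eq]
    exact hm
  have hPae : AEMeasurable P (volume.restrict (Ioi 0)) := radial_aemeas ρ hm hrad
  have hPt : ∀ s, P s ≠ ⊤ := fun s => ENNReal.ofReal_ne_top
  have hKP : ∀ v, K v = P (n3 v) := by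
    intro v
    simp only [hK, hPdef]
    congr 1
    apply hrad
    have hns : ‖Ψ.symm v‖ = n3 v := by
      obtain ⟨h0, h1, h2⟩ := Ψ_symm_coords v
      rw [norm_E3, h0, h1, h2]; rfl
    rw [hns, norm_smul_e3]
    exact (abs_of_nonneg (by unfold n3; positivity)).symm
  have hw₀m : Measurable (Function.uncurry w₀) := by
    apply Measurable.inv
    apply Measurable.ennreal_ofReal
    fun_prop
  have hw₁m : Measurable (Function.uncurry (fun _ _ : ℝ => (1:ℝ≥0∞))) := measurable_const
  -- LHS transfer
  have hone : volume {v : ℝ × ℝ × ℝ | v = (a, 0, 0)} = 0 := by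
    refine measure_mono_null (?_ : _ ⊆ ({a} : Set ℝ) ×ˢ (univ : Set (ℝ × ℝ))) ?_
    · rintro v rfl; exact ⟨rfl, trivial⟩
    · rw [Measure.volume_eq_prod, Measure.prod_prod, Real.volume_singleton, zero_mul]
  have stepA : ∫⁻ y, ENNReal.ofReal (ρ y / ‖a • e3 - y‖)
      = ∫⁻ v, K v * w₀ v.1 (n3 v) := by
    rw [← hΨsmp.lintegral_comp_emb Ψ.symm.measurableEmbedding]
    refine lintegral_congr_ae ?_
    have hptw : ∀ v : ℝ × ℝ × ℝ, v ≠ (a, 0, 0) →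
        ENNReal.ofReal (ρ (Ψ.symm v) / ‖a • e3 - Ψ.symm v‖) = K v * w₀ v.1 (n3 v) := by
      intro v hne
      have hD := norm_sub_smul a v
      have hDpos : 0 < ‖a • e3 - Ψ.symm v‖ := by
        rw [norm_pos_iff, sub_ne_zero]
        intro heq
        apply hne
        have h2 := congrArg Ψ heq
        rw [Ψ.apply_symm_apply, Ψ_apply] at h2
        obtain ⟨g0, g1, g2⟩ := smul_e3_coords a
        rw [g0, g1, g2] at h2
        exact h2.symm
      rw [ENNReal.ofReal_div_of_pos hDpos, hD, div_eq_mul_inv]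
    have hae0 : ∀ᵐ v : ℝ × ℝ × ℝ ∂volume, v ≠ (a, 0, 0) := by
      refine ae_iff.mpr ?_
      have he : {v : ℝ × ℝ × ℝ | ¬ v ≠ (a, 0, 0)} = {v | v = (a, 0, 0)} := by
        ext v; simp
      rw [he]
      exact hone
    filter_upwards [hae0] with v hv using hptw v hv
  -- RHS transfer
  have stepB : ∫⁻ y, ENNReal.ofReal (ρ y)
      = ∫⁻ v, K v * (fun _ _ : ℝ => (1:ℝ≥0∞)) v.1 (n3 v) := by
    rw [← hΨsmp.lintegral_comp_emb Ψ.symm.measurableEmbedding]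
    simp [hK]
  rw [stepA, stepB]
  rw [core K P hKae hPae hPt hKP w₀ hw₀m]
  rw [core K P hKae hPae hPt hKP _ hw₁m]
  -- now compare the two s-integrals
  have hainv_ne_top : (ENNReal.ofReal a)⁻¹ ≠ ⊤ := by
    rw [ENNReal.inv_ne_top]
    simp only [ne_eq, ENNReal.ofReal_eq_zero, not_le]
    exact ha
  rw [show (ENNReal.ofReal a)⁻¹ * (ENNReal.ofReal (2*π) *
      ∫⁻ s in Ioi (0:ℝ), ENNReal.ofReal s * P s * ∫⁻ t in Ioo (-s) s, (1:ℝ≥0∞))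
      = ENNReal.ofReal (2*π) * ((ENNReal.ofReal a)⁻¹ *
      ∫⁻ s in Ioi (0:ℝ), ENNReal.ofReal s * P s * ∫⁻ t in Ioo (-s) s, (1:ℝ≥0∞)) by ring]
  refine mul_le_mul_right ?_ _
  rw [← lintegral_const_mul' _ _ hainv_ne_top]
  refine lintegral_mono_ae ?_
  have hne_a : ∀ᵐ s ∂(volume.restrict (Ioi (0:ℝ))), s ≠ a := by
    refine ae_iff.mpr ?_
    have he : {s : ℝ | ¬ s ≠ a} = {a} := by ext s; simp
    rw [he, Measure.restrict_apply (measurableSet_singleton a)]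
    exact measure_mono_null inter_subset_left Real.volume_singleton
  filter_upwards [hne_a, ae_restrict_mem measurableSet_Ioi] with s hsa hs
  have hI1 : ∫⁻ _ in Ioo (-s) s, (1:ℝ≥0∞) = ENNReal.ofReal (2*s) := by
    rw [setLIntegral_one, Real.volume_Ioo]
    congr 1
    ring
  have hkey : ∫⁻ t in Ioo (-s) s, w₀ t s ≤ ENNReal.ofReal (2*s/a) := key_bound ha hs hsa
  calc ENNReal.ofReal s * P s * ∫⁻ t in Ioo (-s) s, w₀ t s
      ≤ ENNReal.ofReal s * P s * ENNReal.ofReal (2*s/a) := mul_le_mul_right hkey _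
    _ = (ENNReal.ofReal a)⁻¹ * (ENNReal.ofReal s * P s * ENNReal.ofReal (2*s)) := by
        rw [ENNReal.ofReal_div_of_pos ha, div_eq_mul_inv]
        ring
    _ = (ENNReal.ofReal a)⁻¹ * (ENNReal.ofReal s * P s * ∫⁻ _ in Ioo (-s) s, (1:ℝ≥0∞)) := by
        rw [hI1]


end

end NewtonProofAux

open NewtonProofAux in
theorem stmt_12 (ρ : EuclideanSpace ℝ (Fin 3) → ℝ)
    (hρ : Integrable ρ) (hρnonneg : ∀ x, 0 ≤ ρ x)
    (hradial : ∀ x y : EuclideanSpace ℝ (Fin 3), ‖x‖ = ‖y‖ → ρ x = ρ y) :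
    ∀ x : EuclideanSpace ℝ (Fin 3), x ≠ 0 →
      ∫ y, ρ y / ‖x - y‖ ≤ (∫ y, ρ y) / ‖x‖ := by
  intro x hx
  set a : ℝ := ‖x‖ with hadef
  have ha : 0 < a := norm_pos_iff.mpr hx
  have hnorm_eq : ‖x‖ = ‖a • e3‖ := by rw [norm_smul_e3, abs_of_pos ha]
  set R : EuclideanSpace ℝ (Fin 3) ≃ₗᵢ[ℝ] EuclideanSpace ℝ (Fin 3) :=
    Submodule.reflection (ℝ ∙ (x - a • e3))ᗮ with hR
  have hRx : R x = a • e3 := Submodule.reflection_sub hnorm_eq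
  have hRmp : MeasurePreserving R.symm volume volume := R.symm.measurePreserving
  have hint : ∫ y, ρ y / ‖x - y‖ = ∫ y, ρ y / ‖a • e3 - y‖ := by
    calc ∫ y, ρ y / ‖x - y‖
        = ∫ y, ρ (R.symm y) / ‖x - R.symm y‖ :=
          (hRmp.integral_comp R.symm.toHomeomorph.measurableEmbedding
            (fun y => ρ y / ‖x - y‖)).symm
      _ = ∫ y, ρ y / ‖a • e3 - y‖ := by
          refine integral_congr_ae (Filter.Eventually.of_forall fun y => ?_)
          have h1 : ρ (R.symm y) = ρ y := hradial _ _ (R.symm.norm_map y)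
          have h2 : ‖x - R.symm y‖ = ‖a • e3 - y‖ := by
            rw [← R.norm_map (x - R.symm y), map_sub, hRx, R.apply_symm_apply]
          show ρ (R.symm y) / ‖x - R.symm y‖ = ρ y / ‖a • e3 - y‖
          rw [h1, h2]
  rw [hint]
  have hm : AEMeasurable ρ volume := hρ.aemeasurable
  have hsm : AEStronglyMeasurable (fun y => ρ y / ‖a • e3 - y‖) volume := by
    apply AEMeasurable.aestronglyMeasurable
    exact hm.div (Measurable.aemeasurable (by fun_prop))
  have hnn : 0 ≤ᵐ[volume] fun y => ρ y / ‖a • e3 - y‖ :=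
    Filter.Eventually.of_forall fun y => div_nonneg (hρnonneg y) (norm_nonneg _)
  rw [MeasureTheory.integral_eq_lintegral_of_nonneg_ae hnn hsm]
  have hle := main_ineq ρ hm hρnonneg hradial ha
  have hB : ∫⁻ y, ENNReal.ofReal (ρ y) = ENNReal.ofReal (∫ y, ρ y) :=
    (ofReal_integral_eq_lintegral_ofReal hρ (Filter.Eventually.of_forall hρnonneg)).symm
  rw [hB] at hle
  have hfinal : (ENNReal.ofReal a)⁻¹ * ENNReal.ofReal (∫ y, ρ y)
      = ENNReal.ofReal ((∫ y, ρ y) / a) := by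
    rw [ENNReal.ofReal_div_of_pos ha, div_eq_mul_inv, mul_comm]
  rw [hfinal] at hle
  exact ENNReal.toReal_le_of_le_ofReal
    (div_nonneg (integral_nonneg hρnonneg) ha.le) hle
end
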